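/- arXiv:2504.16861 — 2 statements merged into one kernel-verified Lean document; each statement's English description precedes it below -/
import Mathlib

section
/- Define ω(ξ) := sqrt((γ|ξ|/2)·(|ξ|² − (β/2)|ξ| + β − 1)) for γ > 0 and 0 < β < 4(2+√3). Then ω(5) = √5 · ω(3) for all admissible β. -/
theorem stmt5_general (γ β : ℝ) :
    Real.sqrt ((γ * |(5 : ℝ)| / 2) * (|(5 : ℝ)| ^ 2 - (β / 2) * |(5 : ℝ)| + β - 1))
      = Real.sqrt 5 *
        Real.sqrt ((γ * |(3 : ℝ)| / 2) * (|(3 : ℝ)| ^ 2 - (β / 2) * |(3 : ℝ)| + β - 1)) := by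
  rw [← Real.sqrt_mul (by norm_num), abs_of_pos (by norm_num : (0 : ℝ) < 5),
    abs_of_pos (by norm_num : (0 : ℝ) < 3)]
  congr 1
  ring

/-- The Kelvin–Helmholtz dispersion relation
`ω(ξ) = sqrt((γ|ξ|/2)(|ξ|² − (β/2)|ξ| + β − 1))` satisfies the exact resonance
identity `ω(5) = √5 · ω(3)` for all admissible `β`. -/
theorem stmt5 (γ β : ℝ) (hγ : 0 < γ) (hβ0 : 0 < β) (hβ1 : β < 4 * (2 + Real.sqrt 3)) :
    Real.sqrt ((γ * |(5 : ℝ)| / 2) * (|(5 : ℝ)| ^ 2 - (β / 2) * |(5 : ℝ)| + β - 1))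
      = Real.sqrt 5 *
        Real.sqrt ((γ * |(3 : ℝ)| / 2) * (|(3 : ℝ)| ^ 2 - (β / 2) * |(3 : ℝ)| + β - 1)) :=
  stmt5_general γ β
end

section
/- For 0 < β < 4(2+√3), x_0 ∈ (0,1] and y ∈ [0,1], the quantity x_0²(x_0² − y²)β + 2y²(y² + 2x_0²) is strictly positive unless x_0 = y = 0. -/
/-!
With `a = x₀²` and `b = y²` the quantity is `a (a - b) β + 2 b (b + 2a)`, affine in `β`.
For `b ≤ a` both terms are nonnegative and one of them is positive. For `b > a` it is
decreasing in `β`, and at the endpoint `β = 4(2 + √3)` it equals the square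
`2 (b - (1 + √3) a)²`, so it is positive for all smaller `β`.
-/

open Real

lemma denominator_at_critical_eq_sq (a b : ℝ) :
    a * (a - b) * (4 * (2 + √3)) + 2 * b * (b + 2 * a) = 2 * (b - (1 + √3) * a) ^ 2 := by
  linear_combination (-2 * a ^ 2) * sq_sqrt (show (0 : ℝ) ≤ 3 by norm_num)

lemma denominator_pos {a b β : ℝ} (ha : 0 < a) (hb : 0 ≤ b) (hβ0 : 0 < β)
    (hβ1 : β < 4 * (2 + √3)) : 0 < a * (a - b) * β + 2 * b * (b + 2 * a) := by
  rcases le_or_gt b a with hba | hab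
  · rcases hb.eq_or_lt with rfl | hb
    · simpa using mul_pos (mul_pos ha ha) hβ0
    · exact add_pos_of_nonneg_of_pos (by have := sub_nonneg.2 hba; positivity) (by positivity)
  · have hcoeff : a * (a - b) < 0 := mul_neg_of_pos_of_neg ha (sub_neg.2 hab)
    calc 0 ≤ 2 * (b - (1 + √3) * a) ^ 2 := by positivity
      _ = a * (a - b) * (4 * (2 + √3)) + 2 * b * (b + 2 * a) := (denominator_at_critical_eq_sq a b).symm
      _ < a * (a - b) * β + 2 * b * (b + 2 * a) := by
        gcongr ?_ + _
        exact mul_lt_mul_of_neg_left hβ1 hcoeff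

theorem stmt12_general (β x0 y : ℝ) (hβ0 : 0 < β) (hβ1 : β < 4 * (2 + Real.sqrt 3))
    (hx0 : 0 < x0) :
    0 < x0 ^ 2 * (x0 ^ 2 - y ^ 2) * β + 2 * y ^ 2 * (y ^ 2 + 2 * x0 ^ 2) :=
  denominator_pos (pow_pos hx0 2) (sq_nonneg y) hβ0 hβ1

/-- Positivity of the denominator `x₀²(x₀² − y²)β + 2y²(y² + 2x₀²)` appearing in the
`β`-derivative of the rescaled Kelvin–Helmholtz frequency, for `0 < β < 4(2+√3)`,
`x₀ ∈ (0,1]`, `y ∈ [0,1]`. -/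
theorem stmt12 (β x0 y : ℝ) (hβ0 : 0 < β) (hβ1 : β < 4 * (2 + Real.sqrt 3))
    (hx0 : 0 < x0) (hx1 : x0 ≤ 1) (hy0 : 0 ≤ y) (hy1 : y ≤ 1) :
    0 < x0 ^ 2 * (x0 ^ 2 - y ^ 2) * β + 2 * y ^ 2 * (y ^ 2 + 2 * x0 ^ 2) :=
  stmt12_general β x0 y hβ0 hβ1 hx0
end
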